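/- arXiv:1110.0363 — 3 statements merged into one kernel-verified Lean document; each statement's English description precedes it below -/
import Mathlib

section
/- Let A be a subalgebra of S(𝔤) such that its quotient field Q(A) is a maximal Poisson commutative subfield of R(𝔤). Then the Poisson commutant A' = {f ∈ S(𝔤) : {f,a} = 0 for all a ∈ A} equals Q(A) ∩ S(𝔤); A' is a maximal Poisson commutative subalgebra of S(𝔤); and Q(A') = Q(A). -/
open MvPolynomial

noncomputable section

namespace PoissonPaper

variable (k : Type*) [Field k]
variable (L : Type*) [LieRing L] [LieAlgebra k L]

/-- The stabilizer `𝔤(ξ) = {x ∈ 𝔤 ∣ ξ([x,y]) = 0 for all y ∈ 𝔤}` of a linear functional. -/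
def lieStab (ξ : Module.Dual k L) : Submodule k L where
  carrier := {x | ∀ y : L, ξ ⁅x, y⁆ = 0}
  add_mem' := by
    intro a b ha hb y
    rw [Set.mem_setOf_eq] at *
    rw [add_lie, map_add, ha y, hb y, add_zero]
  zero_mem' := by
    intro y
    rw [zero_lie, map_zero]
  smul_mem' := by
    intro c a ha y
    rw [Set.mem_setOf_eq] at *
    rw [smul_lie, map_smul, ha y, smul_zero]

/-- The index `i(𝔤)`: the minimal dimension of a stabilizer `𝔤(ξ)`, `ξ ∈ 𝔤*`. -/
def lieIndex : ℕ :=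
  sInf (Set.range fun ξ : Module.Dual k L => Module.finrank k (lieStab k L ξ))

/-- `c(𝔤) = (dim 𝔤 + i(𝔤))/2`. -/
def cIndex : ℕ := (Module.finrank k L + lieIndex k L) / 2

/-- `ξ ∈ 𝔤*` is regular if `dim 𝔤(ξ) = i(𝔤)`. -/
def IsRegularForm (ξ : Module.Dual k L) : Prop :=
  Module.finrank k (lieStab k L ξ) = lieIndex k L

/-- The Frobenius semi-radical `F(𝔤) = Σ_{ξ regular} 𝔤(ξ)`. -/
def frobSemiradical : Submodule k L :=
  ⨆ ξ ∈ {ξ : Module.Dual k L | IsRegularForm k L ξ}, lieStab k L ξ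

/-- A commutative polarization: a commutative Lie subalgebra of dimension `c(𝔤)`. -/
def IsCP (H : LieSubalgebra k L) : Prop :=
  (∀ x ∈ H, ∀ y ∈ H, ⁅x, y⁆ = 0) ∧ Module.finrank k H = cIndex k L

/-- `𝔤` is unimodular if `tr (ad x) = 0` for all `x`. -/
def IsUnimodular : Prop :=
  ∀ x : L, LinearMap.trace k L (LieAlgebra.ad k L x) = 0

variable {k L}
variable {n : ℕ} (b : Module.Basis (Fin n) k L)

/-- The linear polynomial in `S(𝔤) = k[x₁,…,xₙ]` attached to an element `x ∈ 𝔤`. -/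
def toPoly (x : L) : MvPolynomial (Fin n) k := ∑ i, C (b.repr x i) * X i

/-- The structure matrix `([xᵢ, xⱼ])` with entries in `S(𝔤)`. -/
def structMat : Matrix (Fin n) (Fin n) (MvPolynomial (Fin n) k) :=
  Matrix.of fun i j => toPoly b ⁅b i, b j⁆

/-- The Poisson bracket `{f,g} = Σᵢⱼ [xᵢ,xⱼ] ∂f/∂xᵢ ∂g/∂xⱼ` on `S(𝔤)`. -/
def pbr (f g : MvPolynomial (Fin n) k) : MvPolynomial (Fin n) k :=
  ∑ i, ∑ j, structMat b i j * pderiv i f * pderiv j g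

/-- The Poisson center `Y(𝔤) = {f ∈ S(𝔤) ∣ {x,f} = 0 for all x ∈ 𝔤}`. -/
def poissonCenter : Set (MvPolynomial (Fin n) k) :=
  {f | ∀ x : L, pbr b (toPoly b x) f = 0}

/-- A subset of `S(𝔤)` is Poisson commutative if all brackets vanish. -/
def PoissonCommutativeSet (A : Set (MvPolynomial (Fin n) k)) : Prop :=
  ∀ f ∈ A, ∀ g ∈ A, pbr b f g = 0

/-- A maximal Poisson commutative subalgebra of `S(𝔤)`. -/
def IsMaxPoissonCommutative (A : Subalgebra k (MvPolynomial (Fin n) k)) : Prop :=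
  PoissonCommutativeSet b (A : Set (MvPolynomial (Fin n) k)) ∧
    ∀ B : Subalgebra k (MvPolynomial (Fin n) k),
      PoissonCommutativeSet b (B : Set (MvPolynomial (Fin n) k)) → A ≤ B → A = B

/-- `A ⊆ S(𝔤)` has transcendence degree `r` over `k`. -/
def HasTrdeg (A : Set (MvPolynomial (Fin n) k)) (r : ℕ) : Prop :=
  (∃ f : Fin r → MvPolynomial (Fin n) k, (∀ i, f i ∈ A) ∧ AlgebraicIndependent k f) ∧
    ∀ (m : ℕ) (f : Fin m → MvPolynomial (Fin n) k),
      (∀ i, f i ∈ A) → AlgebraicIndependent k f → m ≤ r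

/-- `f` is a semi-invariant of weight `λ`: `ad x (f) = λ(x) f` for all `x ∈ 𝔤`. -/
def IsSemiInvariantWt (lam : Module.Dual k L) (f : MvPolynomial (Fin n) k) : Prop :=
  ∀ x : L, pbr b (toPoly b x) f = C (lam x) * f

/-- `𝔤` has no proper semi-invariants in `S(𝔤)`. -/
def HasNoProperSemiInvariants : Prop :=
  ∀ (lam : Module.Dual k L) (f : MvPolynomial (Fin n) k),
    f ≠ 0 → IsSemiInvariantWt b lam f → lam = 0

/-- The set of `t×t` minors of the structure matrix, where `t = dim 𝔤 - i(𝔤)`. -/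
def minorSet : Set (MvPolynomial (Fin n) k) :=
  {d | ∃ r c : Fin (Module.finrank k L - lieIndex k L) → Fin n,
      Function.Injective r ∧ Function.Injective c ∧
        d = ((structMat b).submatrix r c).det}

/-- `p` is the fundamental semi-invariant of `𝔤` (characterized, up to a nonzero scalar,
by `p²` being a greatest common divisor of the `t×t` minors of the structure matrix,
i.e. `p` is the gcd of the Pfaffians of the principal `t×t` minors). -/
def IsFundSemiInvariant (p : MvPolynomial (Fin n) k) : Prop :=
  (∀ d ∈ minorSet b, p ^ 2 ∣ d) ∧
    ∀ q : MvPolynomial (Fin n) k, (∀ d ∈ minorSet b, q ∣ d) → q ∣ p ^ 2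

/-- The ideal of polynomial functions on `𝔤*` vanishing on the singular set `𝔤*_sing`. -/
def singVanishingIdeal : Ideal (MvPolynomial (Fin n) k) where
  carrier := {f | ∀ ξ : Module.Dual k L, ¬ IsRegularForm k L ξ →
      eval (fun i => ξ (b i)) f = 0}
  add_mem' := by
    intro f g hf hg ξ hξ
    rw [Set.mem_setOf_eq] at *
    rw [map_add, hf ξ hξ, hg ξ hξ, add_zero]
  zero_mem' := by
    intro ξ hξ
    rw [map_zero]
  smul_mem' := by
    intro c f hf ξ hξ
    rw [Set.mem_setOf_eq] at *
    rw [smul_eq_mul, map_mul, hf ξ hξ, mul_zero]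

/-- The dimension of (the Zariski closure of) the singular set `𝔤*_sing ⊆ 𝔤*`. -/
def singDim : WithBot ℕ∞ :=
  ringKrullDim (MvPolynomial (Fin n) k ⧸ singVanishingIdeal b)

/-- `𝔤` is singular if `codim 𝔤*_sing = 1`, i.e. `dim 𝔤*_sing = dim 𝔤 - 1`. -/
def IsSingular : Prop :=
  singDim b + 1 = ((Module.finrank k L : ℕ∞) : WithBot ℕ∞)

/-- `𝔤` is coregular if the Poisson center `Y(𝔤)` is a polynomial algebra. -/
def IsCoregular : Prop :=
  ∃ (r : ℕ) (f : Fin r → MvPolynomial (Fin n) k),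
    AlgebraicIndependent k f ∧
      poissonCenter b = ↑(Algebra.adjoin k (Set.range f))

/-- The `j`-th `ξ`-shift of `f`: the coefficient of `tʲ` in `f(x₁ + ξ(x₁)t, …, xₙ + ξ(xₙ)t)`. -/
def xiShift (ξ : Module.Dual k L) (f : MvPolynomial (Fin n) k) (j : ℕ) :
    MvPolynomial (Fin n) k :=
  (MvPolynomial.aeval
    (fun i => Polynomial.C (X i) + Polynomial.C (C (ξ (b i))) * Polynomial.X) f).coeff j

/-- The Mishchenko–Fomenko algebra `Y_ξ(𝔤)`, generated by the `ξ`-shifts of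
all elements of the Poisson center. -/
def mfAlgebra (ξ : Module.Dual k L) : Subalgebra k (MvPolynomial (Fin n) k) :=
  Algebra.adjoin k {g | ∃ f ∈ poissonCenter b, ∃ j : ℕ, g = xiShift b ξ f j}

end PoissonPaper

namespace PoissonPaper

variable {k : Type*} [Field k] {L : Type*} [LieRing L] [LieAlgebra k L]
variable {n : ℕ} (b : Module.Basis (Fin n) k L)

/-- Two elements of the Poisson field `R(𝔤) = Frac(S(𝔤))` Poisson-commute:
writing `u = f/g`, `v = h/l`, the numerator of `{u,v}` vanishes. -/
def PComm (u v : FractionRing (MvPolynomial (Fin n) k)) : Prop :=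
  ∃ f g h l : MvPolynomial (Fin n) k, g ≠ 0 ∧ l ≠ 0 ∧
    u * algebraMap (MvPolynomial (Fin n) k) (FractionRing (MvPolynomial (Fin n) k)) g
      = algebraMap (MvPolynomial (Fin n) k) (FractionRing (MvPolynomial (Fin n) k)) f ∧
    v * algebraMap (MvPolynomial (Fin n) k) (FractionRing (MvPolynomial (Fin n) k)) l
      = algebraMap (MvPolynomial (Fin n) k) (FractionRing (MvPolynomial (Fin n) k)) h ∧
    pbr b f h * g * l - pbr b f l * g * h - pbr b g h * f * l + pbr b g l * f * h = 0

/-- The quotient field `Q(A)` of a subset `A ⊆ S(𝔤)`, as a subfield of `R(𝔤)`. -/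
def qSubfield (A : Set (MvPolynomial (Fin n) k)) :
    Subfield (FractionRing (MvPolynomial (Fin n) k)) :=
  Subfield.closure
    (algebraMap (MvPolynomial (Fin n) k) (FractionRing (MvPolynomial (Fin n) k)) '' A)

/-- `K` is a maximal Poisson commutative subfield of `R(𝔤)` (containing the constants). -/
def IsMaxPCommSubfield (K : Subfield (FractionRing (MvPolynomial (Fin n) k))) : Prop :=
  (∀ c : k,
    algebraMap (MvPolynomial (Fin n) k) (FractionRing (MvPolynomial (Fin n) k)) (C c) ∈ K) ∧
  (∀ u ∈ K, ∀ v ∈ K, PComm b u v) ∧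
  ∀ K' : Subfield (FractionRing (MvPolynomial (Fin n) k)),
    (∀ c : k,
      algebraMap (MvPolynomial (Fin n) k) (FractionRing (MvPolynomial (Fin n) k)) (C c) ∈ K') →
    (∀ u ∈ K', ∀ v ∈ K', PComm b u v) → K ≤ K' → K = K'

end PoissonPaper

namespace PoissonPaper

/-!
The bracket of `R(𝔤)` is computed on numerators: `{f/g, h/l} = N / (g² l²)`, where `N` changes
only by a nonzero square factor when the representatives change. Hence the commutant of an element
of `R(𝔤)` is a subfield, and the quotient field of a Poisson commutative set is Poisson
commutative. For `f ∈ A'` the field `Q(A ∪ {f})` is therefore Poisson commutative and contains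
`Q(A)`, so maximality gives `f ∈ Q(A)`; the remaining claims follow formally from this.
-/

section Development

variable {k : Type*} [Field k] {L : Type*} [LieRing L] [LieAlgebra k L]
variable {n : ℕ} (b : Module.Basis (Fin n) k L)

local notation "S𝔤" => MvPolynomial (Fin n) k
local notation "R𝔤" => FractionRing (MvPolynomial (Fin n) k)

section Bracket

lemma structMat_self (i : Fin n) : structMat b i i = 0 := by
  simp [structMat, toPoly]

lemma structMat_swap (i j : Fin n) : structMat b j i = -structMat b i j := by
  simp only [structMat, toPoly, Matrix.of_apply, ← lie_skew (b i) (b j), map_neg,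
    Finsupp.neg_apply, neg_mul, Finset.sum_neg_distrib, neg_neg]

lemma pbr_add_left (f f' g : S𝔤) : pbr b (f + f') g = pbr b f g + pbr b f' g := by
  simp only [pbr, map_add, mul_add, add_mul, Finset.sum_add_distrib]

lemma pbr_neg_left (f g : S𝔤) : pbr b (-f) g = -pbr b f g := by
  simp only [pbr, map_neg, neg_mul, mul_neg, Finset.sum_neg_distrib]

lemma pbr_mul_left (f f' g : S𝔤) : pbr b (f * f') g = f * pbr b f' g + f' * pbr b f g := by
  simp only [pbr, pderiv_mul, Finset.mul_sum, ← Finset.sum_add_distrib]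
  exact Finset.sum_congr rfl fun i _ => Finset.sum_congr rfl fun j _ => by ring

lemma pbr_mul_right (f g g' : S𝔤) : pbr b f (g * g') = g * pbr b f g' + g' * pbr b f g := by
  simp only [pbr, pderiv_mul, Finset.mul_sum, ← Finset.sum_add_distrib]
  exact Finset.sum_congr rfl fun i _ => Finset.sum_congr rfl fun j _ => by ring

lemma pbr_C_left (c : k) (g : S𝔤) : pbr b (C c) g = 0 := by
  simp [pbr]

lemma pbr_zero_left (g : S𝔤) : pbr b 0 g = 0 := by
  simp [pbr]

lemma pbr_one_left (g : S𝔤) : pbr b 1 g = 0 := by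
  simp [pbr]

lemma pbr_one_right (f : S𝔤) : pbr b f 1 = 0 := by
  simp [pbr]

lemma pbr_antisymm (f g : S𝔤) : pbr b g f = -pbr b f g := by
  rw [pbr, Finset.sum_comm, pbr, ← Finset.sum_neg_distrib]
  refine Finset.sum_congr rfl fun i _ => ?_
  rw [← Finset.sum_neg_distrib]
  refine Finset.sum_congr rfl fun j _ => ?_
  rw [structMat_swap]; ring

/-- The terms for `(i, j)` and `(j, i)` cancel and the diagonal of the structure matrix
vanishes. -/
lemma pbr_self (f : S𝔤) : pbr b f f = 0 := by
  rw [pbr, ← Fintype.sum_prod_type']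
  refine Finset.sum_ninvolution Prod.swap (fun p => ?_) (fun p hp hswap => hp ?_)
    (fun _ => Finset.mem_univ _) Prod.swap_swap
  · rw [Prod.fst_swap, Prod.snd_swap, structMat_swap]; ring
  · obtain ⟨i, j⟩ := p
    obtain rfl : j = i := congrArg Prod.fst hswap
    rw [structMat_self, zero_mul, zero_mul]

lemma PoissonCommutativeSet.insert {A : Set S𝔤} (hA : PoissonCommutativeSet b A) {f : S𝔤}
    (hf : ∀ a ∈ A, pbr b f a = 0) : PoissonCommutativeSet b (insert f A) := by
  rintro x (rfl | hx) y (rfl | hy)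
  · exact pbr_self b _
  · exact hf y hy
  · rw [pbr_antisymm, hf x hx, neg_zero]
  · exact hA x hx y hy

end Bracket

section FractionField

/-- `{f/g, h/l} = bracketNumerator b f g h l / (g² l²)`. -/
def bracketNumerator (f g h l : S𝔤) : S𝔤 :=
  pbr b f h * g * l - pbr b f l * g * h - pbr b g h * f * l + pbr b g l * f * h

lemma bracketNumerator_congr_right (f g : S𝔤) {h l h' l' : S𝔤} (e : h * l' = h' * l) :
    l' ^ 2 * bracketNumerator b f g h l = l ^ 2 * bracketNumerator b f g h' l' := by
  have e₁ : pbr b f (h * l') = pbr b f (h' * l) := by rw [e]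
  have e₂ : pbr b g (h * l') = pbr b g (h' * l) := by rw [e]
  rw [pbr_mul_right, pbr_mul_right] at e₁ e₂
  simp only [bracketNumerator]
  linear_combination (l * l' * g) * e₁ - (l * l' * f) * e₂ +
    (pbr b g l * f * l' + pbr b g l' * f * l - pbr b f l * g * l' - pbr b f l' * g * l) * e

lemma exists_mul_algebraMap_eq (v : R𝔤) :
    ∃ h l : S𝔤, l ≠ 0 ∧ v * algebraMap _ R𝔤 l = algebraMap _ R𝔤 h := by
  obtain ⟨⟨h, l⟩, hv⟩ := IsLocalization.surj (nonZeroDivisors S𝔤) v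
  exact ⟨h, l, nonZeroDivisors.coe_ne_zero l, hv⟩

/-- The Poisson commutant of `h / l` in `R(𝔤)`. -/
def fractionCommutant (h l : S𝔤) : Subfield R𝔤 where
  carrier := {u | ∃ f g : S𝔤, g ≠ 0 ∧ u * algebraMap _ R𝔤 g = algebraMap _ R𝔤 f ∧
    bracketNumerator b f g h l = 0}
  zero_mem' := ⟨0, 1, one_ne_zero, by simp, by
    simp [bracketNumerator, pbr_zero_left, pbr_one_left]⟩
  one_mem' := ⟨1, 1, one_ne_zero, by simp, by simp [bracketNumerator, pbr_one_left]⟩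
  add_mem' := by
    rintro u u' ⟨f, g, hg, hu, hN⟩ ⟨f', g', hg', hu', hN'⟩
    refine ⟨f * g' + f' * g, g * g', mul_ne_zero hg hg', ?_, ?_⟩
    · simp only [map_mul, map_add]
      linear_combination algebraMap _ R𝔤 g' * hu + algebraMap _ R𝔤 g * hu'
    · have key : bracketNumerator b (f * g' + f' * g) (g * g') h l
          = g' ^ 2 * bracketNumerator b f g h l + g ^ 2 * bracketNumerator b f' g' h l := by
        simp only [bracketNumerator, pbr_add_left, pbr_mul_left]; ring
      rw [key, hN, hN']; ring
  mul_mem' := by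
    rintro u u' ⟨f, g, hg, hu, hN⟩ ⟨f', g', hg', hu', hN'⟩
    refine ⟨f * f', g * g', mul_ne_zero hg hg', ?_, ?_⟩
    · simp only [map_mul]
      linear_combination (u' * algebraMap _ R𝔤 g') * hu + algebraMap _ R𝔤 f * hu'
    · have key : bracketNumerator b (f * f') (g * g') h l
          = f * g * bracketNumerator b f' g' h l + f' * g' * bracketNumerator b f g h l := by
        simp only [bracketNumerator, pbr_mul_left]; ring
      rw [key, hN, hN']; ring
  neg_mem' := by
    rintro u ⟨f, g, hg, hu, hN⟩
    refine ⟨-f, g, hg, by rw [map_neg]; linear_combination -hu, ?_⟩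
    have key : bracketNumerator b (-f) g h l = -bracketNumerator b f g h l := by
      simp only [bracketNumerator, pbr_neg_left]; ring
    rw [key, hN, neg_zero]
  inv_mem' := by
    rintro u ⟨f, g, hg, hu, hN⟩
    obtain rfl | hu0 := eq_or_ne u 0
    · exact ⟨0, 1, one_ne_zero, by simp,
        by simp [bracketNumerator, pbr_zero_left, pbr_one_left]⟩
    have hf : f ≠ 0 := by
      rintro rfl
      rw [map_zero, mul_eq_zero] at hu
      exact hu.elim hu0 ((map_ne_zero_iff _ (IsFractionRing.injective S𝔤 R𝔤)).mpr hg)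
    refine ⟨g, f, hf, by rw [← hu, ← mul_assoc, inv_mul_cancel₀ hu0, one_mul], ?_⟩
    have key : bracketNumerator b g f h l = -bracketNumerator b f g h l := by
      simp only [bracketNumerator]; ring
    rw [key, hN, neg_zero]

lemma mem_fractionCommutant_iff {u v : R𝔤} {h l : S𝔤} (hl : l ≠ 0)
    (hv : v * algebraMap _ R𝔤 l = algebraMap _ R𝔤 h) :
    u ∈ fractionCommutant b h l ↔ PComm b u v := by
  constructor
  · rintro ⟨f, g, hg, hu, hN⟩
    exact ⟨f, g, h, l, hg, hl, hu, hv, hN⟩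
  · rintro ⟨f, g, h', l', hg, hl', hu, hv', hN⟩
    refine ⟨f, g, hg, hu, ?_⟩
    have e : h' * l = h * l' := IsFractionRing.injective S𝔤 R𝔤 <| by
      rw [map_mul, map_mul, ← hv, ← hv']; ring
    have key := bracketNumerator_congr_right b f g e
    rw [show bracketNumerator b f g h' l' = 0 from hN, mul_zero, eq_comm, mul_eq_zero] at key
    exact key.resolve_left (pow_ne_zero _ hl')

lemma PComm.symm {u v : R𝔤} (huv : PComm b u v) : PComm b v u := by
  obtain ⟨f, g, h, l, hg, hl, hu, hv, hN⟩ := huv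
  refine ⟨h, l, f, g, hl, hg, hv, hu, ?_⟩
  rw [pbr_antisymm b f h, pbr_antisymm b g h, pbr_antisymm b f l, pbr_antisymm b g l]
  linear_combination -hN

lemma pComm_of_mem_closure {T : Set R𝔤} {u v : R𝔤} (hT : ∀ w ∈ T, PComm b w v)
    (hu : u ∈ Subfield.closure T) : PComm b u v := by
  obtain ⟨h, l, hl, hv⟩ := exists_mul_algebraMap_eq v
  have hle : Subfield.closure T ≤ fractionCommutant b h l :=
    Subfield.closure_le.mpr fun w hw => (mem_fractionCommutant_iff b hl hv).mpr (hT w hw)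
  exact (mem_fractionCommutant_iff b hl hv).mp (hle hu)

lemma pComm_closure {T : Set R𝔤} (hT : ∀ u ∈ T, ∀ v ∈ T, PComm b u v) :
    ∀ u ∈ Subfield.closure T, ∀ v ∈ Subfield.closure T, PComm b u v :=
  fun _ hu _ hv => pComm_of_mem_closure b
    (fun w hw => (pComm_of_mem_closure b (fun w' hw' => hT w' hw' w hw) hv).symm) hu

lemma pComm_algebraMap_iff (f g : S𝔤) :
    PComm b (algebraMap _ R𝔤 f) (algebraMap _ R𝔤 g) ↔ pbr b f g = 0 := by
  constructor
  · rintro ⟨f', g', h, l, hg', hl, hf', hh, hN⟩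
    obtain rfl : f * g' = f' := IsFractionRing.injective S𝔤 R𝔤 (by rwa [map_mul])
    obtain rfl : g * l = h := IsFractionRing.injective S𝔤 R𝔤 (by rwa [map_mul])
    have key : bracketNumerator b (f * g') g' (g * l) l = (g' ^ 2 * l ^ 2) * pbr b f g := by
      simp only [bracketNumerator, pbr_mul_left, pbr_mul_right]; ring
    rw [show bracketNumerator b (f * g') g' (g * l) l = 0 from hN, eq_comm, mul_eq_zero] at key
    exact key.resolve_left (mul_ne_zero (pow_ne_zero _ hg') (pow_ne_zero _ hl))
  · intro hfg
    refine ⟨f, 1, g, 1, one_ne_zero, one_ne_zero, by rw [map_one, mul_one],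
      by rw [map_one, mul_one], ?_⟩
    simp [hfg, pbr_one_left, pbr_one_right]

end FractionField

section Commutant

def poissonCommutant (A : Set S𝔤) : Subalgebra k S𝔤 where
  carrier := {f | ∀ a ∈ A, pbr b f a = 0}
  mul_mem' {x y} hx hy a ha := by rw [pbr_mul_left, hx a ha, hy a ha, mul_zero, mul_zero, add_zero]
  one_mem' a _ := pbr_one_left b a
  add_mem' {x y} hx hy a ha := by rw [pbr_add_left, hx a ha, hy a ha, add_zero]
  zero_mem' a _ := pbr_zero_left b a
  algebraMap_mem' c a _ := pbr_C_left b c a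

variable {b}

lemma algebraMap_mem_qSubfield {A : Set S𝔤} {a : S𝔤} (ha : a ∈ A) :
    algebraMap _ R𝔤 a ∈ qSubfield A :=
  Subfield.subset_closure ⟨a, ha, rfl⟩

lemma qSubfield_mono {A B : Set S𝔤} (h : A ⊆ B) : qSubfield A ≤ qSubfield B :=
  Subfield.closure_mono (Set.image_mono h)

lemma PoissonCommutativeSet.pComm_qSubfield {A : Set S𝔤} (hA : PoissonCommutativeSet b A) :
    ∀ u ∈ qSubfield A, ∀ v ∈ qSubfield A, PComm b u v := by
  refine pComm_closure b ?_
  rintro _ ⟨f, hf, rfl⟩ _ ⟨g, hg, rfl⟩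
  exact (pComm_algebraMap_iff b f g).mpr (hA f hf g hg)

lemma pbr_eq_zero_of_isMaxPCommSubfield {A : Set S𝔤} (hA : IsMaxPCommSubfield b (qSubfield A))
    {f g : S𝔤} (hf : algebraMap _ R𝔤 f ∈ qSubfield A)
    (hg : algebraMap _ R𝔤 g ∈ qSubfield A) :
    pbr b f g = 0 :=
  (pComm_algebraMap_iff b f g).mp (hA.2.1 _ hf _ hg)

lemma poissonCommutativeSet_of_isMaxPCommSubfield {A : Set S𝔤}
    (hA : IsMaxPCommSubfield b (qSubfield A)) : PoissonCommutativeSet b A :=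
  fun _ hf _ hg => pbr_eq_zero_of_isMaxPCommSubfield hA
    (algebraMap_mem_qSubfield hf) (algebraMap_mem_qSubfield hg)

/-- Adjoining `f` keeps `Q(A)` Poisson commutative, so maximality puts `f` into `Q(A)`. -/
lemma algebraMap_mem_qSubfield_of_mem_poissonCommutant {A : Set S𝔤}
    (hA : IsMaxPCommSubfield b (qSubfield A)) {f : S𝔤} (hf : f ∈ poissonCommutant b A) :
    algebraMap _ R𝔤 f ∈ qSubfield A := by
  have hle : qSubfield A ≤ qSubfield (insert f A) := qSubfield_mono (Set.subset_insert f A)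
  have hcomm : PoissonCommutativeSet b (insert f A) :=
    (poissonCommutativeSet_of_isMaxPCommSubfield hA).insert b hf
  rw [hA.2.2 _ (fun c => hle (hA.1 c)) hcomm.pComm_qSubfield hle]
  exact algebraMap_mem_qSubfield (Set.mem_insert f A)

lemma coe_poissonCommutant_eq_preimage_qSubfield {A : Set S𝔤}
    (hA : IsMaxPCommSubfield b (qSubfield A)) :
    (poissonCommutant b A : Set S𝔤) = algebraMap _ R𝔤 ⁻¹' qSubfield A :=
  Set.Subset.antisymm (fun _ hf => algebraMap_mem_qSubfield_of_mem_poissonCommutant hA hf)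
    fun _ hf _ ha => pbr_eq_zero_of_isMaxPCommSubfield hA hf (algebraMap_mem_qSubfield ha)

lemma subset_poissonCommutant {A : Set S𝔤} (hA : PoissonCommutativeSet b A) :
    A ⊆ poissonCommutant b A :=
  fun f hf a ha => hA f hf a ha

lemma isMaxPoissonCommutative_poissonCommutant {A : Set S𝔤}
    (hA : IsMaxPCommSubfield b (qSubfield A)) :
    IsMaxPoissonCommutative b (poissonCommutant b A) := by
  have hcoe := coe_poissonCommutant_eq_preimage_qSubfield hA
  have hAsub := subset_poissonCommutant (poissonCommutativeSet_of_isMaxPCommSubfield hA)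
  refine ⟨fun f hf g hg => ?_, fun B hB hle => le_antisymm hle fun x hx a ha => ?_⟩
  · rw [hcoe] at hf hg
    exact pbr_eq_zero_of_isMaxPCommSubfield hA hf hg
  · exact hB x hx a (hle (hAsub ha))

lemma qSubfield_poissonCommutant {A : Set S𝔤} (hA : IsMaxPCommSubfield b (qSubfield A)) :
    qSubfield (poissonCommutant b A) = qSubfield A := by
  refine le_antisymm (Subfield.closure_le.mpr ?_)
    (qSubfield_mono (subset_poissonCommutant (poissonCommutativeSet_of_isMaxPCommSubfield hA)))
  rintro _ ⟨f, hf, rfl⟩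
  exact algebraMap_mem_qSubfield_of_mem_poissonCommutant hA hf

end Commutant

end Development

theorem statement8_general {k : Type*} [Field k]
    {L : Type*} [LieRing L] [LieAlgebra k L]
    {n : ℕ} (b : Module.Basis (Fin n) k L)
    (A : Subalgebra k (MvPolynomial (Fin n) k))
    (hA : IsMaxPCommSubfield b (qSubfield ((A : Set (MvPolynomial (Fin n) k))))) :
    {f : MvPolynomial (Fin n) k | ∀ a ∈ A, pbr b f a = 0}
      = algebraMap (MvPolynomial (Fin n) k) (FractionRing (MvPolynomial (Fin n) k)) ⁻¹'
          ↑(qSubfield ((A : Set (MvPolynomial (Fin n) k)))) ∧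
    (∃ M : Subalgebra k (MvPolynomial (Fin n) k),
        (M : Set (MvPolynomial (Fin n) k)) = {f | ∀ a ∈ A, pbr b f a = 0} ∧
        IsMaxPoissonCommutative b M) ∧
    qSubfield {f : MvPolynomial (Fin n) k | ∀ a ∈ A, pbr b f a = 0}
      = qSubfield ((A : Set (MvPolynomial (Fin n) k))) :=
  ⟨coe_poissonCommutant_eq_preimage_qSubfield hA,
    ⟨poissonCommutant b A, rfl, isMaxPoissonCommutative_poissonCommutant hA⟩,
    qSubfield_poissonCommutant hA⟩

/-- Proposition 18 (i). If `A ⊆ S(𝔤)` is a subalgebra whose quotient field `Q(A)` is a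
maximal Poisson commutative subfield of `R(𝔤)`, then the Poisson commutant
`A' = {f ∣ {f,a} = 0 ∀ a ∈ A}` equals `Q(A) ∩ S(𝔤)`, it is a maximal Poisson commutative
subalgebra of `S(𝔤)`, and `Q(A') = Q(A)`. -/
theorem statement8 {k : Type*} [Field k] [IsAlgClosed k] [CharZero k]
    {L : Type*} [LieRing L] [LieAlgebra k L] [FiniteDimensional k L]
    {n : ℕ} (b : Module.Basis (Fin n) k L)
    (A : Subalgebra k (MvPolynomial (Fin n) k))
    (hA : IsMaxPCommSubfield b (qSubfield ((A : Set (MvPolynomial (Fin n) k))))) :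
    {f : MvPolynomial (Fin n) k | ∀ a ∈ A, pbr b f a = 0}
      = algebraMap (MvPolynomial (Fin n) k) (FractionRing (MvPolynomial (Fin n) k)) ⁻¹'
          ↑(qSubfield ((A : Set (MvPolynomial (Fin n) k)))) ∧
    (∃ M : Subalgebra k (MvPolynomial (Fin n) k),
        (M : Set (MvPolynomial (Fin n) k)) = {f | ∀ a ∈ A, pbr b f a = 0} ∧
        IsMaxPoissonCommutative b M) ∧
    qSubfield {f : MvPolynomial (Fin n) k | ∀ a ∈ A, pbr b f a = 0}
      = qSubfield ((A : Set (MvPolynomial (Fin n) k))) :=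
  statement8_general b A hA

end PoissonPaper
end
end

section
/- For every Lie subalgebra 𝔥 of 𝔤, one has c(𝔥) ≤ c(𝔤). -/
open MvPolynomial

noncomputable section

/-! The index inequality comes from restricting a regular form `ξ` of `𝔤` to `𝔥`. The stabilizer
`𝔥(ξ|𝔥)` is the preimage of the annihilator `𝔥^⊥ ⊆ 𝔤*` under `x ↦ ξ([x, ·])`, a map whose kernel
`𝔥 ∩ 𝔤(ξ)` lies in `𝔤(ξ)`. Hence `i(𝔥) ≤ dim 𝔥(ξ|𝔥) ≤ i(𝔤) + (dim 𝔤 - dim 𝔥)`. -/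

namespace PoissonPaper

open Module

theorem finrank_comap_le_finrank_ker_add {K V W : Type*} [Field K] [AddCommGroup V] [Module K V]
    [AddCommGroup W] [Module K W] [FiniteDimensional K V] [FiniteDimensional K W]
    (f : V →ₗ[K] W) (p : Submodule K W) :
    finrank K (p.comap f) ≤ finrank K (LinearMap.ker f) + finrank K p := by
  let g : p.comap f →ₗ[K] p := f.restrict fun _ hx => hx
  have hker : finrank K (LinearMap.ker g) ≤ finrank K (LinearMap.ker f) := by
    rw [← Submodule.finrank_map_subtype_eq]
    exact Submodule.finrank_mono fun _ ⟨x, hx, hxy⟩ => hxy ▸ congrArg Subtype.val hx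
  have hrank := LinearMap.finrank_range_add_finrank_ker g
  have hrange := Submodule.finrank_le (LinearMap.range g)
  omega

theorem finrank_comap_le_of_injective {K V W : Type*} [Field K] [AddCommGroup V] [Module K V]
    [AddCommGroup W] [Module K W] [FiniteDimensional K V] [FiniteDimensional K W]
    {f : V →ₗ[K] W} (hf : Function.Injective f) (p : Submodule K W) :
    finrank K (p.comap f) ≤ finrank K p := by
  have := finrank_comap_le_finrank_ker_add f p
  rwa [LinearMap.ker_eq_bot.mpr hf, finrank_bot, zero_add] at this

section Stabilizers

variable {k L : Type*} [Field k] [LieRing L] [LieAlgebra k L]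

def kirillovForm (ξ : Dual k L) : L →ₗ[k] L →ₗ[k] k :=
  LinearMap.mk₂ k (fun x y => ξ ⁅x, y⁆)
    (fun _ _ _ => by rw [add_lie, map_add]) (fun _ _ _ => by rw [smul_lie, map_smul])
    (fun _ _ _ => by rw [lie_add, map_add]) (fun _ _ _ => by rw [lie_smul, map_smul])

@[simp]
theorem kirillovForm_apply (ξ : Dual k L) (x y : L) : kirillovForm ξ x y = ξ ⁅x, y⁆ := rfl

theorem lieStab_eq_ker_kirillovForm (ξ : Dual k L) :
    lieStab k L ξ = LinearMap.ker (kirillovForm ξ) := by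
  ext x
  simp [lieStab, LinearMap.ext_iff]

theorem lieIndex_le_finrank_lieStab (ξ : Dual k L) :
    lieIndex k L ≤ finrank k (lieStab k L ξ) :=
  Nat.sInf_le ⟨ξ, rfl⟩

theorem exists_finrank_lieStab_eq_lieIndex :
    ∃ ξ : Dual k L, finrank k (lieStab k L ξ) = lieIndex k L :=
  Nat.sInf_mem (s := Set.range fun ξ : Dual k L => finrank k (lieStab k L ξ)) ⟨_, 0, rfl⟩

theorem lieStab_restrict_eq_comap (H : LieSubalgebra k L) (ξ : Dual k L) :
    lieStab k H (ξ ∘ₗ (H.incl : H →ₗ[k] L)) =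
      (LinearMap.ker (H.incl : H →ₗ[k] L).dualMap).comap
        (kirillovForm ξ ∘ₗ (H.incl : H →ₗ[k] L)) := by
  ext x
  simp [lieStab, LinearMap.ext_iff]

theorem finrank_lieStab_restrict_add_finrank_le [FiniteDimensional k L]
    (H : LieSubalgebra k L) (ξ : Dual k L) :
    finrank k (lieStab k H (ξ ∘ₗ (H.incl : H →ₗ[k] L))) + finrank k H ≤
      finrank k (lieStab k L ξ) + finrank k L := by
  rw [lieStab_restrict_eq_comap]
  set ι : H →ₗ[k] L := (H.incl : H →ₗ[k] L)
  have hι : Function.Injective ι := Subtype.val_injective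
  have hstab : finrank k (LinearMap.ker (kirillovForm ξ ∘ₗ ι)) ≤ finrank k (lieStab k L ξ) := by
    rw [LinearMap.ker_comp, lieStab_eq_ker_kirillovForm]
    exact finrank_comap_le_of_injective hι _
  have hann : finrank k (LinearMap.ker ι.dualMap) + finrank k H = finrank k L := by
    rw [LinearMap.ker_dualMap_eq_dualAnnihilator_range, add_comm,
      ← LinearMap.finrank_range_of_inj hι, Subspace.finrank_add_finrank_dualAnnihilator_eq]
  have hcomap := finrank_comap_le_finrank_ker_add (kirillovForm ξ ∘ₗ ι) (LinearMap.ker ι.dualMap)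
  calc _ + finrank k H ≤ finrank k (LinearMap.ker (kirillovForm ξ ∘ₗ ι)) +
        finrank k (LinearMap.ker ι.dualMap) + finrank k H := Nat.add_le_add_right hcomap _
    _ = finrank k (LinearMap.ker (kirillovForm ξ ∘ₗ ι)) + finrank k L := by rw [add_assoc, hann]
    _ ≤ _ := Nat.add_le_add_right hstab _

end Stabilizers

theorem statement10_general {k : Type*} [Field k]
    {L : Type*} [LieRing L] [LieAlgebra k L] [FiniteDimensional k L]
    (H : LieSubalgebra k L) :
    cIndex k ↥H ≤ cIndex k L := by
  obtain ⟨ξ, hξ⟩ := exists_finrank_lieStab_eq_lieIndex (k := k) (L := L)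
  have hH := lieIndex_le_finrank_lieStab (k := k) (ξ ∘ₗ (H.incl : H →ₗ[k] L))
  have hrestrict := finrank_lieStab_restrict_add_finrank_le H ξ
  exact Nat.div_le_div_right (by omega)

/-- Theorem 22 (1). For every Lie subalgebra `𝔥` of `𝔤`: `c(𝔥) ≤ c(𝔤)`. -/
theorem statement10 {k : Type*} [Field k] [IsAlgClosed k] [CharZero k]
    {L : Type*} [LieRing L] [LieAlgebra k L] [FiniteDimensional k L]
    (H : LieSubalgebra k L) :
    cIndex k ↥H ≤ cIndex k L :=
  statement10_general H

end PoissonPaper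
end
end

section
/- Let 𝔤 be the 7-dimensional nilpotent Lie algebra 𝔤_{7,1.01(i)} over k with basis x_1, ..., x_7 and nonzero brackets [x_1,x_2] = x_4, [x_1,x_4] = x_5, [x_1,x_5] = x_6, [x_1,x_6] = x_7, [x_2,x_3] = x_5 + x_7, [x_3,x_4] = −x_6, [x_3,x_5] = −x_7. Set f = x_6³ − 3x_5x_6x_7 + 3x_4x_7², g = x_6⁴ − 4x_5x_6²x_7 − 2x_6²x_7² + 2x_5²x_7² + 4x_4x_6x_7² + 4x_5x_7³ − 4x_2x_7³, and h = (f⁴ − g³ − 6x_7²f²g)/x_7³ ∈ S(𝔤). If P is a polynomial in three variables X, Y, Z with coefficients in k such that P(f, g, h) is divisible by x_7 in S(𝔤), then P(X, Y, Z) is divisible by X⁴ − Y³ in k[X, Y, Z]. -/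
/-!
Put `x₁ = x₃ = x₄ = x₅ = 0`, `x₂ = z`, `x₆ = a` and reduce modulo `x₇`: cancelling `x₇³` in the
identity defining `h` shows that `f, g, h` become `a³, a⁴, 12 z a⁸`, so `P(a³, a⁴, 12 z a⁸) = 0` for all `a, z`. These points cover the surface
`X⁴ = Y³` away from `X = 0`, so `X · P` vanishes on the whole zero set of `X⁴ - Y³`. In
characteristic zero `X⁴ - Y³` is squarefree, so by the Nullstellensatz it divides `X · P`; being
coprime to `X`, it divides `P`.
-/

open MvPolynomial

noncomputable section

namespace PoissonPaper

/-- `f = x₆³ - 3x₅x₆x₇ + 3x₄x₇²` (variables `xᵢ = X (i-1)`, so `S(𝔤) = k[x₁,…,x₇]`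
is identified with `MvPolynomial (Fin 7) k`). -/
def fpoly (k : Type*) [Field k] : MvPolynomial (Fin 7) k :=
  X 5 ^ 3 - 3 * X 4 * X 5 * X 6 + 3 * X 3 * X 6 ^ 2

/-- `g = x₆⁴ - 4x₅x₆²x₇ - 2x₆²x₇² + 2x₅²x₇² + 4x₄x₆x₇² + 4x₅x₇³ - 4x₂x₇³`. -/
def gpoly (k : Type*) [Field k] : MvPolynomial (Fin 7) k :=
  X 5 ^ 4 - 4 * X 4 * X 5 ^ 2 * X 6 - 2 * X 5 ^ 2 * X 6 ^ 2 + 2 * X 4 ^ 2 * X 6 ^ 2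
    + 4 * X 3 * X 5 * X 6 ^ 2 + 4 * X 4 * X 6 ^ 3 - 4 * X 1 * X 6 ^ 3

end PoissonPaper

namespace MvPolynomial

variable {σ k : Type*}

theorem dvd_pderiv_of_mul_self_dvd [CommSemiring k] {p q : MvPolynomial σ k} (i : σ)
    (h : q * q ∣ p) : q ∣ pderiv i p := by
  obtain ⟨r, rfl⟩ := h
  exact ⟨2 * pderiv i q * r + q * pderiv i r, by simp only [pderiv_mul]; ring⟩

theorem dvd_X_pow_pred_of_dvd_pderiv_X_pow [Field k] [CharZero k] {q : MvPolynomial σ k}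
    {i : σ} {m : ℕ} (hm : m ≠ 0) (h : q ∣ pderiv i (X i ^ m)) : q ∣ X i ^ (m - 1) := by
  have hunit : IsUnit (m : MvPolynomial σ k) := by
    rw [← map_natCast C]
    exact (Nat.cast_ne_zero.2 hm).isUnit.map C
  rwa [pderiv_pow, pderiv_X_self, mul_one, hunit.dvd_mul_left] at h

theorem squarefree_X_pow_sub_X_pow [Field k] [CharZero k] {i j : σ} (hij : i ≠ j) {m n : ℕ}
    (hm : m ≠ 0) (hn : n ≠ 0) : Squarefree (X i ^ m - X j ^ n : MvPolynomial σ k) := by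
  intro q hq
  have hi : q ∣ X i ^ (m - 1) := by
    refine dvd_X_pow_pred_of_dvd_pderiv_X_pow hm ?_
    simpa [pderiv_X_of_ne hij.symm] using dvd_pderiv_of_mul_self_dvd i hq
  have hj : q ∣ X j ^ (n - 1) := by
    refine dvd_X_pow_pred_of_dvd_pderiv_X_pow hn ?_
    simpa [pderiv_X_of_ne hij] using dvd_pderiv_of_mul_self_dvd j hq
  have hXij : IsRelPrime (X i : MvPolynomial σ k) (X j) :=
    X_prime.irreducible.isRelPrime_iff_not_dvd.2 (by simpa using hij)
  exact hXij.pow hi hj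

theorem dvd_of_forall_eval_eq_zero [Field k] [IsAlgClosed k] [Finite σ]
    {D P : MvPolynomial σ k} (hD : Squarefree D) (h : ∀ x, eval x D = 0 → eval x P = 0) :
    D ∣ P := by
  have hP : P ∈ (Ideal.span {D}).radical := by
    rw [← vanishingIdeal_zeroLocus_eq_radical (K := k), mem_vanishingIdeal_iff]
    intro x hx
    simpa using h x (by simpa using hx D (Ideal.subset_span rfl))
  obtain ⟨n, hn⟩ := hP
  rw [Ideal.mem_span_singleton] at hn
  rcases n with _ | n
  · exact (isUnit_of_dvd_one (by simpa using hn)).dvd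
  · exact (hD.dvd_pow_iff_dvd n.succ_ne_zero).1 hn

end MvPolynomial

theorem exists_pow_three_eq_and_pow_four_eq {K : Type*} [Field K] {x y : K} (hx : x ≠ 0)
    (h : x ^ 4 = y ^ 3) : ∃ a, a ^ 3 = x ∧ a ^ 4 = y := by
  have ha : (y / x) ^ 3 = x := by
    rw [div_pow, ← h, pow_succ x 3, mul_div_cancel_left₀ _ (pow_ne_zero 3 hx)]
  refine ⟨y / x, ha, ?_⟩
  rw [pow_succ, ha, mul_div_cancel₀ _ hx]

namespace PoissonPaper

section

variable {k : Type*} [Field k]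

/-- The coordinates `(a, t, z)` of the target stand for `(x₆, x₇, x₂)`; all other `xᵢ` are `0`. -/
def slice : MvPolynomial (Fin 7) k →ₐ[k] MvPolynomial (Fin 3) k :=
  aeval ![0, X 2, 0, 0, 0, X 0, X 1]

theorem slice_fpoly : slice (fpoly k) = X 0 ^ 3 := by
  simp [slice, fpoly]

theorem slice_gpoly : slice (gpoly k) = X 0 ^ 4 - 2 * X 0 ^ 2 * X 1 ^ 2 - 4 * X 2 * X 1 ^ 3 := by
  simp [slice, gpoly, map_ofNat]

theorem slice_eq_of_mul_X_pow_three_eq {h : MvPolynomial (Fin 7) k}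
    (hh : h * X 6 ^ 3 = fpoly k ^ 4 - gpoly k ^ 3 - 6 * X 6 ^ 2 * fpoly k ^ 2 * gpoly k) :
    slice h = 12 * X 2 * X 0 ^ 8 + X 1 * (8 * X 0 ^ 6 * X 1 ^ 2 - 24 * X 2 * X 0 ^ 6 * X 1
      + 48 * X 2 * X 0 ^ 4 * X 1 ^ 3 - 48 * X 2 ^ 2 * X 0 ^ 4 * X 1 ^ 2
      + 96 * X 2 ^ 2 * X 0 ^ 2 * X 1 ^ 4 + 64 * X 2 ^ 3 * X 1 ^ 5) := by
  refine mul_right_cancel₀ (pow_ne_zero 3 (X_ne_zero (1 : Fin 3))) ?_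
  have hX6 : slice (X 6 : MvPolynomial (Fin 7) k) = X 1 := by simp [slice]
  have := congrArg slice hh
  simp only [map_mul, map_sub, map_pow, map_ofNat, hX6, slice_fpoly, slice_gpoly] at this
  rw [this]
  ring

theorem eval_eq_zero_of_X_six_dvd_aeval {h : MvPolynomial (Fin 7) k}
    (hh : h * X 6 ^ 3 = fpoly k ^ 4 - gpoly k ^ 3 - 6 * X 6 ^ 2 * fpoly k ^ 2 * gpoly k)
    {P : MvPolynomial (Fin 3) k}
    (hdvd : (X 6 : MvPolynomial (Fin 7) k) ∣ aeval ![fpoly k, gpoly k, h] P) (a z : k) :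
    eval ![a ^ 3, a ^ 4, 12 * z * a ^ 8] P = 0 := by
  set φ : MvPolynomial (Fin 7) k →ₐ[k] k := (aeval ![a, 0, z]).comp slice
  have hpt : (fun i => φ (![fpoly k, gpoly k, h] i)) = ![a ^ 3, a ^ 4, 12 * z * a ^ 8] := by
    ext i
    fin_cases i
    · simp [φ, slice_fpoly]
    · simp [φ, slice_gpoly]
    · simp [φ, slice_eq_of_mul_X_pow_three_eq hh]
  obtain ⟨B, hB⟩ := hdvd
  have := congrArg φ hB
  rw [← AlgHom.comp_apply, comp_aeval, hpt] at this
  simpa [φ, slice] using this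

theorem eval_eq_zero_of_pow_four_eq_pow_three [CharZero k] {P : MvPolynomial (Fin 3) k}
    (hP : ∀ a z : k, eval ![a ^ 3, a ^ 4, 12 * z * a ^ 8] P = 0) {x : Fin 3 → k}
    (hx0 : x 0 ≠ 0) (hx : x 0 ^ 4 = x 1 ^ 3) : eval x P = 0 := by
  obtain ⟨a, ha3, ha4⟩ := exists_pow_three_eq_and_pow_four_eq hx0 hx
  have ha : a ≠ 0 := by
    rintro rfl
    exact hx0 (by simpa using ha3.symm)
  have hz : 12 * (x 2 / (12 * a ^ 8)) * a ^ 8 = x 2 := by field_simp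
  have hxa : ![a ^ 3, a ^ 4, 12 * (x 2 / (12 * a ^ 8)) * a ^ 8] = x := by
    rw [hz, ha3, ha4]
    ext i
    fin_cases i <;> rfl
  exact hxa ▸ hP a (x 2 / (12 * a ^ 8))

end

/-- Lemma A of Example 34. With `f, g` as above and `h = (f⁴ - g³ - 6x₇²f²g)/x₇³` in
`S(𝔤) = k[x₁, …, x₇]`: if `P ∈ k[X,Y,Z]` is such that `P(f,g,h)` is divisible by `x₇`,
then `P` is divisible by `X⁴ - Y³` in `k[X,Y,Z]`. -/
theorem statement19 {k : Type*} [Field k] [IsAlgClosed k] [CharZero k]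
    (h : MvPolynomial (Fin 7) k)
    (hh : h * X 6 ^ 3 = fpoly k ^ 4 - gpoly k ^ 3 - 6 * X 6 ^ 2 * fpoly k ^ 2 * gpoly k)
    (P : MvPolynomial (Fin 3) k)
    (hdvd : (X 6 : MvPolynomial (Fin 7) k) ∣ MvPolynomial.aeval ![fpoly k, gpoly k, h] P) :
    (X 0 ^ 4 - X 1 ^ 3 : MvPolynomial (Fin 3) k) ∣ P := by
  have hX0 : IsRelPrime (X 0 ^ 4 - X 1 ^ 3 : MvPolynomial (Fin 3) k) (X 0) := by
    refine (X_prime.irreducible.isRelPrime_iff_not_dvd.2 fun hX0 => ?_).symm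
    have : (X 0 : MvPolynomial (Fin 3) k) ∣ X 1 :=
      X_prime.dvd_of_dvd_pow ((dvd_sub_right (dvd_pow_self _ four_ne_zero)).1 hX0)
    simp at this
  refine hX0.dvd_of_dvd_mul_left (dvd_of_forall_eval_eq_zero
    (squarefree_X_pow_sub_X_pow (by decide) four_ne_zero three_ne_zero) fun x hx => ?_)
  rcases eq_or_ne (x 0) 0 with hx0 | hx0
  · simp [hx0]
  rw [eval_mul, eval_eq_zero_of_pow_four_eq_pow_three
    (eval_eq_zero_of_X_six_dvd_aeval hh hdvd) hx0 (by simpa [sub_eq_zero] using hx), mul_zero]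

end PoissonPaper
end
end
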